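/- arXiv:1708.05949 — 4 statements merged into one kernel-verified Lean document; each statement's English description precedes it below -/
import Mathlib

section
/- Let F be a linearly ordered field and let L_1, …, L_n be a line arrangement in F² (n ≥ 0). Then the total number of regions of the arrangement equals n(n+1)/2 + 1, i.e., C(n+1, 2) + 1. -/
/-- The affine functional `p ↦ a i * p.1 + b i * p.2 - c i` cutting out the `i`-th line. -/
def arrLine {F : Type*} [Field F] [LinearOrder F] [IsStrictOrderedRing F] {n : ℕ} (a b c : Fin n → F)
    (i : Fin n) (p : F × F) : F :=
  a i * p.1 + b i * p.2 - c i

/-- The open region of the arrangement associated to the sign vector `ε`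
(`true ↦ +1`, `false ↦ -1`). -/
def arrRegion {F : Type*} [Field F] [LinearOrder F] [IsStrictOrderedRing F] {n : ℕ} (a b c : Fin n → F)
    (ε : Fin n → Bool) : Set (F × F) :=
  {p : F × F | ∀ i : Fin n, 0 < (if ε i then (1 : F) else -1) * arrLine a b c i p}

/-!
Deletion–restriction: adding a line `g = 0` to an arrangement keeps every old region that misses
the line and splits every region that meets it in two, so the count grows by the number of
regions that the old lines cut out on the new line. Parametrising the new line by `F`, those are
the regions of an arrangement of `n` distinct points on a line, of which there are `n + 1` by the
same recursion; hence the count grows by `n + 1` and equals `n(n+1)/2 + 1`.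
-/

lemma ncard_eq_ncard_snoc_true_add_ncard_snoc_false {n : ℕ} (S : Set (Fin (n + 1) → Bool)) :
    S.ncard = {ε | Fin.snoc ε true ∈ S}.ncard + {ε | Fin.snoc ε false ∈ S}.ncard := by
  have hS : S = (Fin.snoc · true) '' {ε | Fin.snoc ε true ∈ S} ∪
      (Fin.snoc · false) '' {ε | Fin.snoc ε false ∈ S} := by
    ext ε
    constructor
    · intro h
      obtain ⟨ε', s, rfl⟩ : ∃ ε' s, ε = Fin.snoc ε' s :=
        ⟨Fin.init ε, ε (Fin.last n), (Fin.snoc_init_self ε).symm⟩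
      cases s <;> simp [h]
    · rintro (⟨ε', h, rfl⟩ | ⟨ε', h, rfl⟩) <;> exact h
  have hdisj : Disjoint ((Fin.snoc · true) '' {ε | Fin.snoc ε true ∈ S})
      ((Fin.snoc · false) '' {ε | Fin.snoc ε false ∈ S}) := by
    refine Set.disjoint_left.mpr ?_
    rintro _ ⟨ε, -, rfl⟩ ⟨ε', -, h⟩
    simp at h
  conv_lhs => rw [hS]
  rw [Set.ncard_union_eq hdisj]
  congr 1 <;> exact Set.ncard_image_of_injective _ (Fin.snoc_left_injective (α := fun _ => Bool) _)

lemma AffineMap.apply_add_smul {R V : Type*} [CommRing R] [AddCommGroup V] [Module R V]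
    (g : V →ᵃ[R] R) (p v : V) (t : R) :
    g (p + t • v) = g p + t * g.linear v := by
  rw [add_comm p, ← vadd_eq_add, g.map_vadd, vadd_eq_add, map_smul, smul_eq_mul, add_comm]

section SignRegions

variable {F : Type*} [Field F] [LinearOrder F] {V : Type*} [AddCommGroup V] [Module F V] {ι : Type*}

def signRegion (f : ι → V →ᵃ[F] F) (ε : ι → Bool) : Set V :=
  {p | ∀ i, 0 < (if ε i then (1 : F) else -1) * f i p}

def regions (f : ι → V →ᵃ[F] F) : Set (ι → Bool) :=
  {ε | (signRegion f ε).Nonempty}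

def cutRegions (f : ι → V →ᵃ[F] F) (g : V →ᵃ[F] F) : Set (ι → Bool) :=
  {ε | ∃ p ∈ signRegion f ε, g p = 0}

lemma mem_signRegion_snoc {n : ℕ} (f : Fin n → V →ᵃ[F] F) (g : V →ᵃ[F] F) (ε : Fin n → Bool)
    (s : Bool) (p : V) :
    p ∈ signRegion (Fin.snoc f g : Fin (n + 1) → V →ᵃ[F] F) (Fin.snoc ε s) ↔
      p ∈ signRegion f ε ∧ 0 < (if s then (1 : F) else -1) * g p := by
  simp [signRegion, Fin.forall_fin_succ']

lemma ncard_regions_of_isEmpty [IsEmpty ι] (f : ι → V →ᵃ[F] F) : (regions f).ncard = 1 := by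
  have : regions f = Set.univ := Set.eq_univ_of_forall fun ε => ⟨0, fun i => isEmptyElim i⟩
  rw [this, Set.ncard_univ, Nat.card_unique]

lemma cutRegions_eq_regions_comp {W : Type*} [AddCommGroup W] [Module F W]
    (f : ι → V →ᵃ[F] F) (g : V →ᵃ[F] F) (φ : W →ᵃ[F] V) (hφ : Set.range φ = {p | g p = 0}) :
    cutRegions f g = regions (fun i => (f i).comp φ) := by
  ext ε
  constructor
  · rintro ⟨p, hp, hgp⟩
    obtain ⟨t, rfl⟩ : p ∈ Set.range φ := hφ ▸ hgp
    exact ⟨t, hp⟩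
  · rintro ⟨t, ht⟩
    exact ⟨φ t, ht, show φ t ∈ {p | g p = 0} from hφ ▸ Set.mem_range_self t⟩

variable [IsStrictOrderedRing F]

lemma sign_mul_pos_iff (e : Bool) (x : F) :
    0 < (if e then (1 : F) else -1) * x ↔ x ≠ 0 ∧ e = decide (0 < x) := by
  rcases lt_trichotomy x 0 with h | rfl | h
  · cases e <;> simp [h, h.ne, h.not_gt]
  · simp
  · cases e <;> simp [h, h.ne', h.not_gt]

lemma convex_signRegion (f : ι → V →ᵃ[F] F) (ε : ι → Bool) : Convex F (signRegion f ε) := by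
  have : signRegion f ε = ⋂ i, ((if ε i then (1 : F) else -1) • f i) ⁻¹' Set.Ioi 0 := by
    ext p
    simp only [signRegion, Set.mem_ofPred_eq, Set.mem_iInter, Set.mem_preimage, Set.mem_Ioi,
      AffineMap.coe_smul, Pi.smul_apply, smul_eq_mul]
  rw [this]
  exact convex_iInter fun i => (convex_Ioi 0).affine_preimage _

lemma mem_cutRegions_of_neg_of_pos {f : ι → V →ᵃ[F] F} {g : V →ᵃ[F] F} {ε : ι → Bool} {p q : V}
    (hp : p ∈ signRegion f ε) (hq : q ∈ signRegion f ε) (hgp : g p < 0) (hgq : 0 < g q) :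
    ε ∈ cutRegions f g := by
  have ht : g p / (g p - g q) ∈ Set.Icc (0 : F) 1 := by
    constructor
    · exact div_nonneg_of_nonpos hgp.le (by linarith)
    · rw [div_le_one_of_neg (by linarith)]; linarith
  refine ⟨AffineMap.lineMap p q (g p / (g p - g q)),
    (convex_signRegion f ε).lineMap_mem hp hq ht, ?_⟩
  have hne : g p - g q ≠ 0 := by linarith
  rw [AffineMap.apply_lineMap, AffineMap.lineMap_apply_ring']
  field_simp
  ring

lemma exists_pos_forall_abs_mul_lt [Fintype ι] (u w : ι → F) (hu : ∀ i, 0 < u i) :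
    ∃ δ > 0, ∀ i, |w i| * δ < u i := by
  -- `δ = 1 / (∑ |w i| / u i + 1)` avoids taking a minimum over `ι`
  set S := ∑ i, |w i| / u i
  have hS : 0 ≤ S := Finset.sum_nonneg fun i _ => div_nonneg (abs_nonneg _) (hu i).le
  refine ⟨1 / (S + 1), by positivity, fun i => ?_⟩
  have hi : |w i| / u i ≤ S :=
    Finset.single_le_sum (fun j _ => div_nonneg (abs_nonneg _) (hu j).le) (Finset.mem_univ i)
  rw [div_le_iff₀ (hu i)] at hi
  rw [mul_one_div, div_lt_iff₀ (by positivity)]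
  nlinarith [hu i]

lemma LinearMap.exists_pos_of_ne_zero {L : V →ₗ[F] F} (hL : L ≠ 0) : ∃ v, 0 < L v := by
  obtain ⟨v, hv⟩ := DFunLike.ne_iff.mp hL
  rcases (show L v ≠ 0 from hv).lt_or_gt with h | h
  · exact ⟨-v, by simpa using h⟩
  · exact ⟨v, h⟩

lemma exists_pos_add_smul_mem_signRegion [Fintype ι] {f : ι → V →ᵃ[F] F} {ε : ι → Bool} {p : V}
    (hp : p ∈ signRegion f ε) (v : V) :
    ∃ δ > 0, ∀ s : F, |s| ≤ δ → p + s • v ∈ signRegion f ε := by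
  obtain ⟨δ, hδ, hlt⟩ := exists_pos_forall_abs_mul_lt _ (fun i => (f i).linear v) hp
  refine ⟨δ, hδ, fun s hs i => ?_⟩
  have hsmall : |s * (f i).linear v| < (if ε i then (1 : F) else -1) * f i p := by
    rw [abs_mul, mul_comm]
    exact (mul_le_mul_of_nonneg_left hs (abs_nonneg _)).trans_lt (hlt i)
  have hbounds := abs_lt.mp hsmall
  rw [AffineMap.apply_add_smul]
  split_ifs at hbounds ⊢ <;> linarith

section Snoc

variable {n : ℕ} {f : Fin n → V →ᵃ[F] F} {g : V →ᵃ[F] F}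

lemma snoc_mem_regions_of_mem_cutRegions (hg : g.linear ≠ 0) {ε : Fin n → Bool}
    (h : ε ∈ cutRegions f g) (s : Bool) :
    Fin.snoc ε s ∈ regions (Fin.snoc f g : Fin (n + 1) → V →ᵃ[F] F) := by
  obtain ⟨p, hp, hgp⟩ := h
  obtain ⟨v, hv⟩ := LinearMap.exists_pos_of_ne_zero hg
  obtain ⟨δ, hδ, hmem⟩ := exists_pos_add_smul_mem_signRegion hp v
  have hside : ∀ t : F, g (p + t • v) = t * g.linear v := by
    intro t; rw [AffineMap.apply_add_smul, hgp, zero_add]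
  cases s
  · refine ⟨p + (-δ) • v, (mem_signRegion_snoc ..).2 ⟨hmem _ (by simp [abs_of_pos hδ]), ?_⟩⟩
    simp only [hside, Bool.false_eq_true, if_false]
    nlinarith
  · refine ⟨p + δ • v, (mem_signRegion_snoc ..).2 ⟨hmem _ (abs_of_pos hδ).le, ?_⟩⟩
    simp only [hside, if_true]
    nlinarith

lemma snoc_true_union_snoc_false_eq_regions (hg : g.linear ≠ 0) :
    {ε | Fin.snoc ε true ∈ regions (Fin.snoc f g : Fin (n + 1) → V →ᵃ[F] F)} ∪
      {ε | Fin.snoc ε false ∈ regions (Fin.snoc f g : Fin (n + 1) → V →ᵃ[F] F)} = regions f := by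
  ext ε
  constructor
  · rintro (⟨p, hp⟩ | ⟨p, hp⟩) <;> exact ⟨p, ((mem_signRegion_snoc ..).1 hp).1⟩
  · rintro ⟨p, hp⟩
    rcases lt_trichotomy (g p) 0 with h | h | h
    · exact Or.inr ⟨p, (mem_signRegion_snoc ..).2 ⟨hp, by simpa using h⟩⟩
    · exact Or.inl (snoc_mem_regions_of_mem_cutRegions hg ⟨p, hp, h⟩ true)
    · exact Or.inl ⟨p, (mem_signRegion_snoc ..).2 ⟨hp, by simpa using h⟩⟩

lemma snoc_true_inter_snoc_false_eq_cutRegions (hg : g.linear ≠ 0) :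
    {ε | Fin.snoc ε true ∈ regions (Fin.snoc f g : Fin (n + 1) → V →ᵃ[F] F)} ∩
      {ε | Fin.snoc ε false ∈ regions (Fin.snoc f g : Fin (n + 1) → V →ᵃ[F] F)} =
      cutRegions f g := by
  ext ε
  constructor
  · rintro ⟨⟨q, hq⟩, ⟨p, hp⟩⟩
    rw [mem_signRegion_snoc] at hp hq
    exact mem_cutRegions_of_neg_of_pos hp.1 hq.1 (by simpa using hp.2) (by simpa using hq.2)
  · intro h
    exact ⟨snoc_mem_regions_of_mem_cutRegions hg h true,
      snoc_mem_regions_of_mem_cutRegions hg h false⟩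

theorem ncard_regions_snoc (hg : g.linear ≠ 0) :
    (regions (Fin.snoc f g : Fin (n + 1) → V →ᵃ[F] F)).ncard =
      (regions f).ncard + (cutRegions f g).ncard := by
  rw [ncard_eq_ncard_snoc_true_add_ncard_snoc_false, ← Set.ncard_union_add_ncard_inter,
    snoc_true_union_snoc_false_eq_regions hg, snoc_true_inter_snoc_false_eq_cutRegions hg]

end Snoc

lemma cutRegions_eq_singleton {f : ι → V →ᵃ[F] F} {g : V →ᵃ[F] F} {z : V}
    (hz : {p | g p = 0} = {z}) (hf : ∀ i, f i z ≠ 0) :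
    cutRegions f g = {fun i => decide (0 < f i z)} := by
  ext ε
  constructor
  · rintro ⟨p, hp, hgp⟩
    obtain rfl : p = z := show p ∈ ({z} : Set V) from hz ▸ hgp
    funext i
    exact ((sign_mul_pos_iff _ _).1 (hp i)).2
  · rintro rfl
    exact ⟨z, fun i => (sign_mul_pos_iff _ _).2 ⟨hf i, rfl⟩,
      show z ∈ {p | g p = 0} from hz ▸ Set.mem_singleton z⟩

lemma AffineMap.exists_setOf_eq_zero_eq_singleton (g : F →ᵃ[F] F) (hg : g.linear ≠ 0) :
    ∃ z, {t | g t = 0} = {z} := by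
  have hm : g.linear 1 ≠ 0 := fun h => hg (LinearMap.ext_ring (by simpa using h))
  have hval : ∀ t, g t = g 0 + t * g.linear 1 := fun t => by simpa using g.apply_add_smul 0 1 t
  refine ⟨-g 0 / g.linear 1, Set.ext fun t => ?_⟩
  rw [Set.mem_ofPred_eq, Set.mem_singleton_iff, hval, eq_div_iff hm]
  constructor <;> intro h <;> linarith

theorem ncard_regions_of_distinct_roots {n : ℕ} (f : Fin n → F →ᵃ[F] F)
    (hf : ∀ i, (f i).linear ≠ 0) (hroots : ∀ i j, i ≠ j → ∀ t, f i t = 0 → f j t ≠ 0) :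
    (regions f).ncard = n + 1 := by
  induction n with
  | zero => exact ncard_regions_of_isEmpty f
  | succ n ih =>
    obtain ⟨z, hz⟩ := (f (Fin.last n)).exists_setOf_eq_zero_eq_singleton (hf _)
    have hfz : f (Fin.last n) z = 0 := show z ∈ {t | f (Fin.last n) t = 0} from hz ▸ rfl
    rw [← Fin.snoc_init_self f, ncard_regions_snoc (hf _),
      ih (Fin.init f) (fun i => hf _) fun i j hij => hroots _ _ ((Fin.castSucc_injective n).ne hij),
      cutRegions_eq_singleton (f := Fin.init f) hz fun i =>
        hroots _ _ (Fin.castSucc_lt_last i).ne' z hfz,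
      Set.ncard_singleton]

end SignRegions

section Plane

variable {F : Type*} [Field F]

/-- The line `A x + B y = C`, starting from its point closest to the origin, with direction
`(-B, A)`. -/
def lineParam (A B C : F) : F →ᵃ[F] F × F where
  toFun t := (A * C / (A ^ 2 + B ^ 2) - B * t, B * C / (A ^ 2 + B ^ 2) + A * t)
  linear := LinearMap.smulRight LinearMap.id (-B, A)
  map_vadd' t s := by
    ext <;> simp only [vadd_eq_add, LinearMap.coe_smulRight, LinearMap.id_coe, id_eq,
      Prod.smul_mk, smul_eq_mul, mul_neg, Prod.mk_add_mk] <;> ring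

lemma lineParam_linear_one (A B C : F) : (lineParam A B C).linear 1 = (-B, A) := by
  simp [lineParam]

variable [LinearOrder F] [IsStrictOrderedRing F] {n : ℕ}

def arrAffine (a b c : Fin n → F) (i : Fin n) : F × F →ᵃ[F] F where
  toFun := arrLine a b c i
  linear := a i • LinearMap.fst F F F + b i • LinearMap.snd F F F
  map_vadd' p v := by
    simp only [arrLine, vadd_eq_add, Prod.fst_add, Prod.snd_add, LinearMap.add_apply,
      LinearMap.smul_apply, LinearMap.fst_apply, LinearMap.snd_apply, smul_eq_mul]
    ring

lemma arrAffine_linear_apply (a b c : Fin n → F) (i : Fin n) (v : F × F) :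
    (arrAffine a b c i).linear v = a i * v.1 + b i * v.2 := rfl

lemma init_arrAffine (a b c : Fin (n + 1) → F) :
    Fin.init (arrAffine a b c) = arrAffine (Fin.init a) (Fin.init b) (Fin.init c) := rfl

lemma arrAffine_linear_ne_zero {a b c : Fin n → F} {i : Fin n} (h : (a i, b i) ≠ (0, 0)) :
    (arrAffine a b c i).linear ≠ 0 := by
  intro h0
  have h1 := LinearMap.congr_fun h0 (1, 0)
  have h2 := LinearMap.congr_fun h0 (0, 1)
  simp only [arrAffine, LinearMap.add_apply, LinearMap.smul_apply, LinearMap.fst_apply,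
    LinearMap.snd_apply, smul_eq_mul, LinearMap.zero_apply] at h1 h2
  exact h (by simp_all)

lemma range_lineParam {A B C : F} (h : (A, B) ≠ (0, 0)) :
    Set.range (lineParam A B C) = {p | A * p.1 + B * p.2 - C = 0} := by
  have hD : A ^ 2 + B ^ 2 ≠ 0 := by
    rw [sq, sq]
    exact fun h0 => h (by simp [mul_self_add_mul_self_eq_zero.1 h0])
  ext p
  constructor
  · rintro ⟨t, rfl⟩
    simp only [lineParam, AffineMap.coe_mk, Set.mem_ofPred_eq]
    field_simp
    ring
  · intro hp
    refine ⟨(A * p.2 - B * p.1) / (A ^ 2 + B ^ 2), ?_⟩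
    simp only [lineParam, AffineMap.coe_mk, Set.mem_ofPred_eq] at hp ⊢
    ext
    · field_simp
      linear_combination (-A) * hp
    · field_simp
      linear_combination (-B) * hp

structure IsLineArrangement (a b c : Fin n → F) : Prop where
  nondegenerate : ∀ i, (a i, b i) ≠ (0, 0)
  not_parallel : ∀ i j, i ≠ j → a i * b j ≠ a j * b i
  not_concurrent : ∀ i j k, i ≠ j → j ≠ k → i ≠ k →
    ¬ ∃ p : F × F, arrLine a b c i p = 0 ∧ arrLine a b c j p = 0 ∧ arrLine a b c k p = 0

namespace IsLineArrangement

variable {a b c : Fin (n + 1) → F}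

lemma init (h : IsLineArrangement a b c) :
    IsLineArrangement (Fin.init a) (Fin.init b) (Fin.init c) where
  nondegenerate _ := h.nondegenerate _
  not_parallel _ _ hij := h.not_parallel _ _ ((Fin.castSucc_injective n).ne hij)
  not_concurrent _ _ _ hij hjk hik := h.not_concurrent _ _ _ ((Fin.castSucc_injective n).ne hij)
    ((Fin.castSucc_injective n).ne hjk) ((Fin.castSucc_injective n).ne hik)

lemma ncard_cutRegions_last (h : IsLineArrangement a b c) :
    (cutRegions (Fin.init (arrAffine a b c)) (arrAffine a b c (Fin.last n))).ncard = n + 1 := by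
  have hline := range_lineParam (C := c (Fin.last n)) (h.nondegenerate (Fin.last n))
  rw [init_arrAffine, cutRegions_eq_regions_comp _ _ _ hline]
  apply ncard_regions_of_distinct_roots
  · intro i h0
    have := LinearMap.congr_fun h0 1
    rw [AffineMap.comp_linear, LinearMap.comp_apply, lineParam_linear_one, arrAffine_linear_apply,
      LinearMap.zero_apply] at this
    dsimp only [Fin.init] at this
    exact h.not_parallel i.castSucc (Fin.last n) (Fin.castSucc_lt_last i).ne
      (by linear_combination -this)
  · intro i j hij t hi hj
    exact h.not_concurrent i.castSucc j.castSucc (Fin.last n) ((Fin.castSucc_injective n).ne hij)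
      (Fin.castSucc_lt_last j).ne (Fin.castSucc_lt_last i).ne
      ⟨lineParam _ _ _ t, hi, hj, hline.subset ⟨t, rfl⟩⟩

end IsLineArrangement

theorem IsLineArrangement.ncard_regions {a b c : Fin n → F} (h : IsLineArrangement a b c) :
    (regions (arrAffine a b c)).ncard = n * (n + 1) / 2 + 1 := by
  induction n with
  | zero => exact ncard_regions_of_isEmpty _
  | succ n ih =>
    rw [← Fin.snoc_init_self (arrAffine a b c),
      ncard_regions_snoc (arrAffine_linear_ne_zero (h.nondegenerate _)), h.ncard_cutRegions_last,
      init_arrAffine, ih h.init]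
    have : (n + 1) * (n + 1 + 1) = n * (n + 1) + 2 * (n + 1) := by ring
    rw [this, Nat.add_mul_div_left _ _ two_pos]
    ring

end Plane

/-- Count of the number of regions: a line arrangement of `n` lines in the plane over a
linearly ordered field (no two parallel, no three concurrent) has exactly
`n(n+1)/2 + 1 = C(n+1, 2) + 1` regions. -/
theorem count_regions_of_line_arrangement
    {F : Type*} [Field F] [LinearOrder F] [IsStrictOrderedRing F] (n : ℕ)
    (a b c : Fin n → F)
    (hnd : ∀ i : Fin n, (a i, b i) ≠ (0, 0))
    (hpar : ∀ i j : Fin n, i ≠ j → a i * b j ≠ a j * b i)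
    (hconc : ∀ i j k : Fin n, i ≠ j → j ≠ k → i ≠ k →
      ¬ ∃ p : F × F, arrLine a b c i p = 0 ∧ arrLine a b c j p = 0 ∧ arrLine a b c k p = 0) :
    Nat.card {ε : Fin n → Bool // (arrRegion a b c ε).Nonempty} = n * (n + 1) / 2 + 1 :=
  (Nat.card_coe_set_eq (regions (arrAffine a b c))).trans
    (IsLineArrangement.ncard_regions ⟨hnd, hpar, hconc⟩)
end

section
/- Let F be a linearly ordered field and let L_1, …, L_n be a line arrangement in F² with n ≥ 1. Then the number of unbounded regions of the arrangement equals 2n. -/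
/-- A subset of the plane is unbounded if it contains a ray. -/
def arrUnbounded {F : Type*} [Field F] [LinearOrder F] [IsStrictOrderedRing F] (R : Set (F × F)) : Prop :=
  ∃ v w : F × F, w ≠ 0 ∧ ∀ t : F, 0 ≤ t → v + t • w ∈ R

/-!
A region `R_ε` contains a ray `v + t • w` only if `ε i * (a i * w.1 + b i * w.2) ≥ 0` for every `i`;
conversely, if all these quantities are positive then `T • w + t • w ∈ R_ε` for `T` large and all
`t ≥ 0`. So the unbounded regions correspond to the open cones of the central arrangement
`a i * x + b i * y = 0`, as soon as a nonzero weak direction can be made strict. After a shear the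
`i`-th form reads `β i * (u.1 - m i * u.2)` with `β i ≠ 0` and pairwise distinct slopes `m i`. Once
the signs of the `β i` are absorbed into `ε`, the sign vectors realized weakly by a nonzero `u`, and
those realized strictly, are both exactly the cuts `{i | m i < z}` of the slopes and their
complements. There are `n + 1` cuts, as many complements, and the two families share only the two
constant vectors: `2 * n` cones in all.
-/

open Function

section LowerCut

variable {ι α : Type*} [LinearOrder α] {m : ι → α} {τ : ι → Bool}

def IsLowerCut (m : ι → α) (τ : ι → Bool) : Prop :=
  ∀ ⦃i j⦄, m i < m j → τ j → τ i

def cutBelow (m : ι → α) : Option ι → ι → Bool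
  | none => fun _ => true
  | some x => fun i => decide (m i < m x)

lemma isLowerCut_cutBelow (x : Option ι) : IsLowerCut m (cutBelow m x) := by
  cases x with
  | none => exact fun _ _ _ _ => rfl
  | some x =>
    intro i j hij hj
    simp only [cutBelow, decide_eq_true_eq] at hj ⊢
    exact hij.trans hj

lemma cutBelow_injective (hm : Injective m) : Injective (cutBelow m) := by
  rintro (_ | x) (_ | y) h
  · rfl
  · simpa [cutBelow] using congrFun h y
  · simpa [cutBelow] using congrFun h x
  · have hxy : ¬ m x < m y := by simpa [cutBelow] using congrFun h x
    have hyx : ¬ m y < m x := by simpa [cutBelow] using congrFun h y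
    exact congrArg some (hm (le_antisymm (not_lt.1 hyx) (not_lt.1 hxy)))

lemma IsLowerCut.mem_range_cutBelow [Finite ι] (hm : Injective m) (hτ : IsLowerCut m τ) :
    τ ∈ Set.range (cutBelow m) := by
  by_cases htop : ∀ i, τ i
  · exact ⟨none, funext fun i => (htop i).symm⟩
  replace htop : {i | τ i = false}.Nonempty := by simpa [Set.Nonempty] using htop
  obtain ⟨x, hx, hmin⟩ := Set.exists_min_image {i | τ i = false} m (Set.toFinite _) htop
  refine ⟨some x, funext fun i => ?_⟩
  cases hi : τ i
  · simpa [cutBelow] using hmin i hi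
  · simp only [cutBelow, decide_eq_true_eq]
    by_contra! hxi
    rcases hxi.lt_or_eq with hlt | heq
    · simp [hτ hlt hi] at hx
    · simp [hm heq, hi] at hx

lemma setOf_isLowerCut_eq_range_cutBelow [Finite ι] (hm : Injective m) :
    {τ | IsLowerCut m τ} = Set.range (cutBelow m) :=
  Set.ext fun _ => ⟨(·.mem_range_cutBelow hm), by rintro ⟨x, rfl⟩; exact isLowerCut_cutBelow x⟩

lemma ncard_setOf_isLowerCut [Fintype ι] (hm : Injective m) :
    {τ | IsLowerCut m τ}.ncard = Fintype.card ι + 1 := by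
  rw [setOf_isLowerCut_eq_range_cutBelow hm, Set.ncard_range_of_injective (cutBelow_injective hm),
    Nat.card_eq_fintype_card, Fintype.card_option]

lemma isLowerCut_not_iff : IsLowerCut m (fun i => !τ i) ↔ ∀ ⦃i j⦄, m i < m j → τ i → τ j := by
  simp only [IsLowerCut, Bool.not_eq_true']
  exact forall₂_congr fun i j => imp_congr_right fun _ => by cases τ i <;> cases τ j <;> simp

lemma IsLowerCut.eq_const (hm : Injective m) (h : IsLowerCut m τ)
    (h' : IsLowerCut m (fun i => !τ i)) (i j : ι) : τ i = τ j := by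
  rw [isLowerCut_not_iff] at h'
  rcases lt_trichotomy (m i) (m j) with hij | hij | hij
  · exact Bool.eq_iff_iff.2 ⟨h' hij, h hij⟩
  · rw [hm hij]
  · exact Bool.eq_iff_iff.2 ⟨h hij, h' hij⟩

def IsCut (m : ι → α) (τ : ι → Bool) : Prop :=
  IsLowerCut m τ ∨ IsLowerCut m (fun i => !τ i)

lemma ncard_setOf_isCut [Fintype ι] [Nonempty ι] (hm : Injective m) :
    {τ | IsCut m τ}.ncard = 2 * Fintype.card ι := by
  have hnot : {τ : ι → Bool | IsLowerCut m (fun i => !τ i)} =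
      (fun τ i => !τ i) '' {τ | IsLowerCut m τ} := by
    ext τ
    refine ⟨fun h => ⟨_, h, by simp⟩, ?_⟩
    rintro ⟨σ, hσ, rfl⟩
    simpa using hσ
  have hcard_not : {τ : ι → Bool | IsLowerCut m (fun i => !τ i)}.ncard = Fintype.card ι + 1 := by
    rw [hnot, Set.ncard_image_of_injective _
      fun σ τ h => funext fun i => Bool.not_inj (congrFun h i), ncard_setOf_isLowerCut hm]
  have hboth : {τ | IsLowerCut m τ} ∩ {τ | IsLowerCut m (fun i => !τ i)} =
      Set.range (const ι) := by
    ext τ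
    refine ⟨fun ⟨h, h'⟩ => ?_, ?_⟩
    · obtain ⟨i₀⟩ := ‹Nonempty ι›
      exact ⟨τ i₀, funext fun i => h.eq_const hm h' i₀ i⟩
    · rintro ⟨b, rfl⟩
      exact ⟨fun _ _ _ h => h, fun _ _ _ h => h⟩
  have key := Set.ncard_union_add_ncard_inter {τ | IsLowerCut m τ}
    {τ | IsLowerCut m (fun i => !τ i)}
  rw [hboth, Set.ncard_range_of_injective const_injective, Nat.card_eq_fintype_card,
    Fintype.card_bool, ncard_setOf_isLowerCut hm, hcard_not] at key
  simp only [IsCut, Set.ofPred_or]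
  omega

end LowerCut

def boolSign {F : Type*} [One F] [Neg F] (b : Bool) : F := if b then 1 else -1

@[simp] lemma boolSign_true {F : Type*} [One F] [Neg F] : (boolSign true : F) = 1 := rfl

@[simp] lemma boolSign_false {F : Type*} [One F] [Neg F] : (boolSign false : F) = -1 := rfl

lemma boolSign_not {F : Type*} [One F] [InvolutiveNeg F] (b : Bool) :
    (boolSign (!b) : F) = -boolSign b := by
  cases b <;> simp

lemma boolSign_not_mul_neg_slope {F : Type*} [CommRing F] (b : Bool) (x : F) (u : F × F) :
    boolSign (!b) * ((-u).1 - x * (-u).2) = boolSign b * (u.1 - x * u.2) := by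
  rw [boolSign_not, Prod.fst_neg, Prod.snd_neg]
  ring

section Slopes

variable {ι F : Type*} [Field F] [LinearOrder F] [IsStrictOrderedRing F] {m : ι → F}
  {τ : ι → Bool} {u : F × F}

lemma isLowerCut_of_forall_nonneg (hu : u ≠ 0) (hu₂ : 0 ≤ u.2)
    (h : ∀ i, 0 ≤ boolSign (τ i) * (u.1 - m i * u.2)) : IsLowerCut m τ := by
  intro i j hij hj
  by_contra hi
  rw [Bool.not_eq_true] at hi
  have hi' := h i
  have hj' := h j
  simp only [hj, hi, boolSign_true, boolSign_false, one_mul, neg_one_mul] at hi' hj'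
  have hu₂' : u.2 = 0 := by nlinarith
  rw [hu₂'] at hi' hj'
  exact hu (Prod.ext (show u.1 = 0 by linarith) hu₂')

lemma isCut_of_forall_nonneg (hu : u ≠ 0) (h : ∀ i, 0 ≤ boolSign (τ i) * (u.1 - m i * u.2)) :
    IsCut m τ := by
  rcases le_total 0 u.2 with hu₂ | hu₂
  · exact Or.inl (isLowerCut_of_forall_nonneg hu hu₂ h)
  · refine Or.inr (isLowerCut_of_forall_nonneg (neg_ne_zero.2 hu) (by simpa using hu₂) fun i => ?_)
    rw [boolSign_not_mul_neg_slope]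
    exact h i

lemma IsLowerCut.exists_forall_pos [Finite ι] (hm : Injective m) (hτ : IsLowerCut m τ) :
    ∃ u : F × F, ∀ i, 0 < boolSign (τ i) * (u.1 - m i * u.2) := by
  have hsep : ∀ x ∈ m '' {i | τ i}, ∀ y ∈ m '' {i | τ i = false}, x < y := by
    rintro _ ⟨i, hi, rfl⟩ _ ⟨j, hj, rfl⟩
    rcases lt_trichotomy (m i) (m j) with hij | hij | hij
    · exact hij
    · simp_all [hm hij]
    · simp_all [hτ hij hi]
  obtain ⟨z, hlt, hgt⟩ := (Set.toFinite _).exists_between' (Set.toFinite _) hsep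
  refine ⟨(z, 1), fun i => ?_⟩
  cases hi : τ i
  · simpa using hgt _ ⟨i, hi, rfl⟩
  · simpa using hlt _ ⟨i, hi, rfl⟩

lemma IsCut.exists_forall_pos [Finite ι] (hm : Injective m) (hτ : IsCut m τ) :
    ∃ u : F × F, ∀ i, 0 < boolSign (τ i) * (u.1 - m i * u.2) := by
  rcases hτ with hτ | hτ
  · exact hτ.exists_forall_pos hm
  · obtain ⟨u, hu⟩ := hτ.exists_forall_pos hm
    refine ⟨-u, fun i => ?_⟩
    have hui := hu i
    rwa [← boolSign_not_mul_neg_slope, Bool.not_not] at hui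

end Slopes

section Signs

variable {F : Type*} [Field F] [LinearOrder F] [IsStrictOrderedRing F] {B : F}

lemma boolSign_mul_eq_boolSign_xor_mul_abs (hB : B ≠ 0) (e : Bool) :
    boolSign e * B = boolSign (e ^^ decide (B < 0)) * |B| := by
  rcases hB.lt_or_gt with hB | hB <;> cases e <;> simp [hB, hB.not_gt, abs_of_neg, abs_of_pos]

lemma boolSign_mul_mul_pos_iff (hB : B ≠ 0) (e : Bool) (X : F) :
    0 < boolSign e * (B * X) ↔ 0 < boolSign (e ^^ decide (B < 0)) * X := by
  rw [← mul_assoc, boolSign_mul_eq_boolSign_xor_mul_abs hB, mul_right_comm,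
    mul_pos_iff_of_pos_right (abs_pos.2 hB)]

lemma boolSign_mul_mul_nonneg_iff (hB : B ≠ 0) (e : Bool) (X : F) :
    0 ≤ boolSign e * (B * X) ↔ 0 ≤ boolSign (e ^^ decide (B < 0)) * X := by
  rw [← mul_assoc, boolSign_mul_eq_boolSign_xor_mul_abs hB, mul_right_comm,
    mul_nonneg_iff_of_pos_right (abs_pos.2 hB)]

lemma nonneg_of_forall_pos_add_mul {A B : F} (h : ∀ t, 0 ≤ t → 0 < A + t * B) : 0 ≤ B := by
  by_contra! hB
  have hA := h 0 le_rfl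
  rw [zero_mul, add_zero] at hA
  have := h (-A / B) (div_nonneg_of_nonpos (by linarith) hB.le)
  rw [div_mul_cancel₀ _ hB.ne] at this
  linarith

end Signs

def flipSigns {ι F : Type*} [Zero F] [LT F] [DecidableLT F] (β : ι → F) (ε : ι → Bool) :
    ι → Bool :=
  fun i => ε i ^^ decide (β i < 0)

lemma flipSigns_involutive {ι F : Type*} [Zero F] [LT F] [DecidableLT F] (β : ι → F) :
    Involutive (flipSigns β) :=
  fun ε => funext fun i => by simp [flipSigns]

section Arrangement

variable {F : Type*} [Field F] [LinearOrder F] [IsStrictOrderedRing F] {n : ℕ}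
  {a b c : Fin n → F} {ε : Fin n → Bool} {w : F × F}

lemma mem_arrRegion {p : F × F} :
    p ∈ arrRegion a b c ε ↔ ∀ i, 0 < boolSign (ε i) * arrLine a b c i p :=
  Iff.rfl

lemma arrLine_add_smul (i : Fin n) (p w : F × F) (t : F) :
    arrLine a b c i (p + t • w) = arrLine a b c i p + t * arrLine a b 0 i w := by
  simp only [arrLine, Prod.fst_add, Prod.snd_add, Prod.smul_fst, Prod.smul_snd, smul_eq_mul,
    Pi.zero_apply]
  ring

lemma ne_zero_of_mem_arrRegion_zero [NeZero n] (hw : w ∈ arrRegion a b 0 ε) : w ≠ 0 := by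
  rintro rfl
  simpa [arrLine] using hw 0

lemma exists_slope_coordinates (hnd : ∀ i, (a i, b i) ≠ (0, 0))
    (hpar : ∀ i j, i ≠ j → a i * b j ≠ a j * b i) :
    ∃ (Φ : (F × F) ≃ₗ[F] F × F) (β m : Fin n → F), (∀ i, β i ≠ 0) ∧ Injective m ∧
      ∀ i u, arrLine a b 0 i (Φ u) = β i * (u.1 - m i * u.2) := by
  -- with `d ∉ {-a i / b i}`, the shear `(u₁, u₂) ↦ (u₁, u₂ + d u₁)` makes every `β i` nonzero
  obtain ⟨d, hd⟩ := (Set.finite_range fun i => -a i / b i).exists_notMem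
  have hβ : ∀ i, a i + d * b i ≠ 0 := by
    intro i h
    rcases eq_or_ne (b i) 0 with hb | hb
    · exact hnd i (by simp_all)
    · exact hd ⟨i, by field_simp; linarith⟩
  refine ⟨(LinearEquiv.refl F F).skewProd (LinearEquiv.refl F F) (d • LinearMap.id),
    fun i => a i + d * b i, fun i => -b i / (a i + d * b i), hβ, fun i j hij => ?_, fun i u => ?_⟩
  · by_contra hne
    rw [div_eq_div_iff (hβ i) (hβ j)] at hij
    exact hpar i j hne (by linear_combination hij)
  · simp only [arrLine, LinearEquiv.skewProd_apply, LinearEquiv.refl_apply, LinearMap.smul_apply,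
      LinearMap.id_apply, smul_eq_mul, Pi.zero_apply, sub_zero]
    rw [mul_sub, ← mul_assoc, mul_div_cancel₀ _ (hβ i)]
    ring

section SlopeCoordinates

variable {Φ : (F × F) ≃ₗ[F] F × F} {β m : Fin n → F} (hβ : ∀ i, β i ≠ 0)
  (hΦ : ∀ i u, arrLine a b 0 i (Φ u) = β i * (u.1 - m i * u.2))
include hβ hΦ

lemma isCut_flipSigns_of_forall_nonneg (hw : w ≠ 0)
    (h : ∀ i, 0 ≤ boolSign (ε i) * arrLine a b 0 i w) : IsCut m (flipSigns β ε) := by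
  refine isCut_of_forall_nonneg (Φ.symm.map_ne_zero_iff.2 hw) fun i => ?_
  change 0 ≤ boolSign (ε i ^^ decide (β i < 0)) * _
  rw [← boolSign_mul_mul_nonneg_iff (hβ i), ← hΦ, Φ.apply_symm_apply]
  exact h i

lemma nonempty_arrRegion_zero_of_isCut_flipSigns (hm : Injective m)
    (h : IsCut m (flipSigns β ε)) : (arrRegion a b 0 ε).Nonempty := by
  obtain ⟨u, hu⟩ := h.exists_forall_pos hm
  exact ⟨Φ u, mem_arrRegion.2 fun i => by rw [hΦ, boolSign_mul_mul_pos_iff (hβ i)]; exact hu i⟩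

end SlopeCoordinates

lemma exists_forall_nonneg_of_arrUnbounded (h : arrUnbounded (arrRegion a b c ε)) :
    ∃ w ≠ 0, ∀ i, 0 ≤ boolSign (ε i) * arrLine a b 0 i w := by
  obtain ⟨v, w, hw, hray⟩ := h
  refine ⟨w, hw, fun i => nonneg_of_forall_pos_add_mul
    (A := boolSign (ε i) * arrLine a b c i v) fun t ht => ?_⟩
  have hvt := hray t ht i
  rwa [arrLine_add_smul, mul_add, mul_left_comm] at hvt

lemma exists_forall_ge_smul_mem_arrRegion (hw : w ∈ arrRegion a b 0 ε) :
    ∃ T : F, ∀ t ≥ T, t • w ∈ arrRegion a b c ε := by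
  refine Filter.eventually_atTop.1 (Filter.eventually_all.2 fun i => ?_)
  have hlim : Filter.Tendsto (fun t => boolSign (ε i) * arrLine a b c i 0 +
      t * (boolSign (ε i) * arrLine a b 0 i w)) Filter.atTop Filter.atTop :=
    Filter.tendsto_atTop_add_const_left _ _ (Filter.tendsto_id.atTop_mul_const (hw i))
  filter_upwards [hlim.eventually_gt_atTop 0] with t ht
  rwa [← zero_add (t • w), arrLine_add_smul, mul_add, mul_left_comm]

lemma nonempty_and_arrUnbounded_of_mem_arrRegion_zero [NeZero n] (hw : w ∈ arrRegion a b 0 ε) :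
    (arrRegion a b c ε).Nonempty ∧ arrUnbounded (arrRegion a b c ε) := by
  obtain ⟨T, hT⟩ := exists_forall_ge_smul_mem_arrRegion (c := c) hw
  refine ⟨⟨T • w, hT T le_rfl⟩, T • w, w, ne_zero_of_mem_arrRegion_zero hw, fun t ht => ?_⟩
  rw [← add_smul]
  exact hT _ (le_add_of_nonneg_right ht)

section NonDegenerate

variable (hnd : ∀ i, (a i, b i) ≠ (0, 0)) (hpar : ∀ i j, i ≠ j → a i * b j ≠ a j * b i)
include hnd hpar

lemma nonempty_arrRegion_zero_of_forall_nonneg (hw : w ≠ 0)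
    (h : ∀ i, 0 ≤ boolSign (ε i) * arrLine a b 0 i w) : (arrRegion a b 0 ε).Nonempty := by
  obtain ⟨Φ, β, m, hβ, hm, hΦ⟩ := exists_slope_coordinates hnd hpar
  exact nonempty_arrRegion_zero_of_isCut_flipSigns hβ hΦ hm
    (isCut_flipSigns_of_forall_nonneg hβ hΦ hw h)

lemma card_nonempty_arrRegion_zero [NeZero n] :
    Nat.card {ε : Fin n → Bool // (arrRegion a b 0 ε).Nonempty} = 2 * n := by
  obtain ⟨Φ, β, m, hβ, hm, hΦ⟩ := exists_slope_coordinates hnd hpar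
  have hcut (ε : Fin n → Bool) : (arrRegion a b 0 ε).Nonempty ↔ IsCut m (flipSigns β ε) :=
    ⟨fun ⟨w, hw⟩ => isCut_flipSigns_of_forall_nonneg hβ hΦ (ne_zero_of_mem_arrRegion_zero hw)
      fun i => (hw i).le, nonempty_arrRegion_zero_of_isCut_flipSigns hβ hΦ hm⟩
  calc Nat.card {ε : Fin n → Bool // (arrRegion a b 0 ε).Nonempty}
      = Nat.card {τ : Fin n → Bool // IsCut m τ} :=
        Nat.card_congr ((Equiv.subtypeEquivRight hcut).trans
          (((flipSigns_involutive β).toPerm _).subtypeEquiv fun _ => Iff.rfl))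
    _ = 2 * n := by
        rw [← Set.coe_ofPred, Nat.card_coe_set_eq, ncard_setOf_isCut hm, Fintype.card_fin]

lemma nonempty_and_arrUnbounded_iff [NeZero n] :
    (arrRegion a b c ε).Nonempty ∧ arrUnbounded (arrRegion a b c ε) ↔
      (arrRegion a b 0 ε).Nonempty := by
  refine ⟨fun ⟨_, hunb⟩ => ?_, fun ⟨w, hw⟩ => nonempty_and_arrUnbounded_of_mem_arrRegion_zero hw⟩
  obtain ⟨w, hw, hnonneg⟩ := exists_forall_nonneg_of_arrUnbounded hunb
  exact nonempty_arrRegion_zero_of_forall_nonneg hnd hpar hw hnonneg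

end NonDegenerate

end Arrangement

theorem count_unbounded_regions_of_line_arrangement_general
    {F : Type*} [Field F] [LinearOrder F] [IsStrictOrderedRing F] (n : ℕ) (hn : 1 ≤ n)
    (a b c : Fin n → F)
    (hnd : ∀ i : Fin n, (a i, b i) ≠ (0, 0))
    (hpar : ∀ i j : Fin n, i ≠ j → a i * b j ≠ a j * b i) :
    Nat.card {ε : Fin n → Bool // (arrRegion a b c ε).Nonempty ∧
      arrUnbounded (arrRegion a b c ε)} = 2 * n := by
  have : NeZero n := ⟨by omega⟩
  rw [Nat.card_congr (Equiv.subtypeEquivRight fun ε => nonempty_and_arrUnbounded_iff hnd hpar)]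
  exact card_nonempty_arrRegion_zero hnd hpar

/-- A line arrangement of `n ≥ 1` lines in the plane over a linearly ordered field
(no two parallel, no three concurrent) has exactly `2n` unbounded regions. -/
theorem count_unbounded_regions_of_line_arrangement
    {F : Type*} [Field F] [LinearOrder F] [IsStrictOrderedRing F] (n : ℕ) (hn : 1 ≤ n)
    (a b c : Fin n → F)
    (hnd : ∀ i : Fin n, (a i, b i) ≠ (0, 0))
    (hpar : ∀ i j : Fin n, i ≠ j → a i * b j ≠ a j * b i)
    (hconc : ∀ i j k : Fin n, i ≠ j → j ≠ k → i ≠ k →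
      ¬ ∃ p : F × F, arrLine a b c i p = 0 ∧ arrLine a b c j p = 0 ∧ arrLine a b c k p = 0) :
    Nat.card {ε : Fin n → Bool // (arrRegion a b c ε).Nonempty ∧
      arrUnbounded (arrRegion a b c ε)} = 2 * n :=
  count_unbounded_regions_of_line_arrangement_general n hn a b c hnd hpar
end

section
/- Let F be a linearly ordered field and let L_1, …, L_n be a line arrangement in F² with n ≥ 1. Then the number of bounded regions of the arrangement equals (n−1)(n−2)/2, i.e., C(n−1, 2). -/
/-!
A shear `(x, y) ↦ (x + λ y, y)` makes every line non-vertical, so that line `i` becomes the graph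
of `x ↦ m i * x + k i` with pairwise distinct slopes, and a region is described by the lines it lies
above (sign `true`) and below (sign `false`). A region contains a ray exactly when its sign vector
is sorted by slope in one direction: every line below it is less steep than every line above it
(the region then contains a ray going right), or steeper (a ray going left).

A nonempty region that is not sorted the second way has a leftmost vertex, the crossing of largest
abscissa of a line below it with a steeper line above it; conversely each of the `C(n, 2)` vertices
is the leftmost vertex of exactly one region, the one just to its right. Among these regions, those
sorted the first way correspond to the `n - 1` ways of splitting the lines, ordered by slope, into
a nonempty lower and a nonempty upper part. Hence `C(n, 2) - (n - 1) = C(n - 1, 2)` regions are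
bounded.
-/

open Finset Filter

section

variable {F : Type*} [Field F] [LinearOrder F] [IsStrictOrderedRing F]

lemma arrUnbounded.of_preimage {R : Set (F × F)} (f : (F × F) →ₗ[F] F × F)
    (hf : Function.Injective f) (h : arrUnbounded (f ⁻¹' R)) : arrUnbounded R := by
  obtain ⟨v, w, hw, hray⟩ := h
  exact ⟨f v, f w, (map_ne_zero_iff f hf).mpr hw, fun t ht => by simpa using hray t ht⟩

lemma arrUnbounded_preimage (e : (F × F) ≃ₗ[F] F × F) {R : Set (F × F)} :
    arrUnbounded (e ⁻¹' R) ↔ arrUnbounded R :=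
  ⟨arrUnbounded.of_preimage e.toLinearMap e.injective, fun h =>
    arrUnbounded.of_preimage e.symm.toLinearMap e.symm.injective (by
      rwa [← Set.preimage_comp, show ⇑e ∘ e.symm.toLinearMap = id from funext e.apply_symm_apply,
        Set.preimage_id])⟩

lemma eventually_mul_add_lt_mul_add {a b : F} (h : a < b) (c d : F) :
    ∀ᶠ x in atTop, a * x + c < b * x + d := by
  filter_upwards [eventually_gt_atTop ((c - d) / (b - a))] with x hx
  rw [div_lt_iff₀ (sub_pos.mpr h)] at hx
  linarith

lemma eq_zero_of_forall_nonneg_mem_Ioo {lo hi u s : F}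
    (h : ∀ t : F, 0 ≤ t → u + t * s ∈ Set.Ioo lo hi) : s = 0 := by
  by_contra hs
  have ⟨hlo, hhi⟩ := h 0 le_rfl
  have ⟨hlo', hhi'⟩ := h ((hi - lo) / |s|) (div_nonneg (by linarith) (abs_nonneg s))
  rcases lt_or_gt_of_ne hs with hneg | hpos
  · rw [abs_of_neg hneg, div_mul_eq_mul_div, div_neg, mul_div_assoc, div_self hs] at hlo'
    linarith
  · rw [abs_of_pos hpos, div_mul_cancel₀ _ hs] at hhi'
    linarith

end

lemma Nat.choose_two_eq_choose_two_sub_one_add (n : ℕ) :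
    n.choose 2 = (n - 1).choose 2 + (n - 1) := by
  cases n with
  | zero => rfl
  | succ n => rw [Nat.choose_succ_succ', Nat.choose_one_right, add_tsub_cancel_right, add_comm]

lemma Nat.card_subtype_and_not_add {α : Type*} [Finite α] (p q : α → Prop) :
    Nat.card {a // p a ∧ ¬ q a} + Nat.card {a // p a ∧ q a} = Nat.card {a // p a} := by
  classical
  have := Fintype.ofFinite α
  simp only [Nat.card_eq_fintype_card, Fintype.card_subtype, ← filter_filter]
  rw [add_comm, card_filter_add_card_filter_not]

lemma Function.Injective.card_subtype_lt_eq_choose_two {ι β : Type*} [Fintype ι] [LinearOrder β]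
    {m : ι → β} (hm : Function.Injective m) :
    Nat.card {p : ι × ι // m p.1 < m p.2} = (Fintype.card ι).choose 2 := by
  let _ : LinearOrder ι := LinearOrder.lift' m hm
  rw [Nat.card_eq_fintype_card, Fintype.card_subtype]
  exact Fintype.card_product_filter_lt

namespace SlopeArrangement

section Sorted

variable {ι β : Type*} [LinearOrder β] {m : ι → β} {ε : ι → Bool} {t f : ι}

def Sorted (m : ι → β) (ε : ι → Bool) : Prop :=
  ∀ t f, ε t = true → ε f = false → m t < m f

lemma not_sorted_of_le (ht : ε t = true) (hf : ε f = false) (h : m f ≤ m t) : ¬ Sorted m ε :=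
  fun hs => (hs t f ht hf).not_ge h

lemma exists_lt_of_not_sorted (hm : Function.Injective m) (h : ¬ Sorted m ε) :
    ∃ t f, ε t = true ∧ ε f = false ∧ m f < m t := by
  simp only [Sorted, not_forall, not_lt] at h
  obtain ⟨t, f, ht, hf, hle⟩ := h
  refine ⟨t, f, ht, hf, hle.lt_of_ne fun h => ?_⟩
  simp [hm h, ht] at hf

lemma Sorted.eq_true_of_card_le [Fintype ι] {ε' : ι → Bool} (hs : Sorted m ε)
    (hs' : Sorted m ε') (hcard : #{l | ε l = true} ≤ #{l | ε' l = true}) {l : ι} (hl : ε l = true) :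
    ε' l = true := by
  by_contra hl'
  rw [Bool.not_eq_true] at hl'
  have hsub : ({l | ε' l = true} : Finset ι) ⊆ ({l | ε l = true} : Finset ι) := by
    intro l' hl''
    simp only [mem_filter, mem_univ, true_and] at hl'' ⊢
    by_contra h
    rw [Bool.not_eq_true] at h
    exact (hs l l' hl h).asymm (hs' l' l hl'' hl')
  have hmem : l ∈ ({l | ε l = true} : Finset ι) := by simpa using hl
  rw [← eq_of_subset_of_card_le hsub hcard] at hmem
  simp [hl'] at hmem

lemma Sorted.eq_of_card_eq [Fintype ι] {ε' : ι → Bool} (hs : Sorted m ε) (hs' : Sorted m ε')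
    (hcard : #{l | ε l = true} = #{l | ε' l = true}) : ε = ε' :=
  funext fun _ => Bool.eq_iff_iff.mpr
    ⟨hs.eq_true_of_card_le hs' hcard.le, hs'.eq_true_of_card_le hs hcard.ge⟩

lemma exists_sorted_card_eq [Fintype ι] [DecidableEq ι] (hm : Function.Injective m) {r : ℕ}
    (hr : r ≤ Fintype.card ι) : ∃ ε : ι → Bool, Sorted m ε ∧ #{l | ε l = true} = r := by
  induction r with
  | zero => exact ⟨fun _ => false, fun t _ ht => by simp at ht, by simp⟩
  | succ r ih =>
    obtain ⟨ε, hs, hcard⟩ := ih (by omega)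
    obtain ⟨l₀, hl₀, hmin⟩ : ∃ l₀, ε l₀ = false ∧ ∀ l, ε l = false → m l₀ ≤ m l := by
      have : ({l | ε l = true} : Finset ι) ≠ univ := by
        rw [← card_lt_iff_ne_univ]
        omega
      obtain ⟨l, -, hl⟩ := exists_of_ssubset (ssubset_univ_iff.mpr this)
      obtain ⟨l₀, hl₀, hmin⟩ :=
        exists_min_image ({l | ε l = false} : Finset ι) m ⟨l, by simpa using hl⟩
      exact ⟨l₀, by simpa using hl₀, fun l hl => hmin l (by simpa using hl)⟩
    -- Adding the false line of least slope to the true ones keeps the vector sorted.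
    refine ⟨Function.update ε l₀ true, fun t f ht hf => ?_, ?_⟩
    · have hfl₀ : f ≠ l₀ := by rintro rfl; simp at hf
      rw [Function.update_of_ne hfl₀] at hf
      by_cases htl₀ : t = l₀
      · subst htl₀
        exact (hmin f hf).lt_of_ne fun h => hfl₀ (hm h).symm
      · rw [Function.update_of_ne htl₀] at ht
        exact hs t f ht hf
    · have : ({l | Function.update ε l₀ true l = true} : Finset ι) =
          insert l₀ ({l | ε l = true} : Finset ι) := by
        ext l
        by_cases hl : l = l₀ <;> simp [hl, Function.update_of_ne]
      rw [this, card_insert_of_notMem (by simp [hl₀]), hcard]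

end Sorted

variable {F : Type*} [Field F] {ι : Type*}

def lineAt (m k : ι → F) (i : ι) (x : F) : F := m i * x + k i

-- Junk (a division by zero) when the two lines are parallel.
def crossing (m k : ι → F) (i j : ι) : F := (k i - k j) / (m j - m i)

def NoThreeConcurrent (m k : ι → F) : Prop :=
  ∀ i j l : ι, i ≠ j → j ≠ l → i ≠ l → ∀ x : F,
    lineAt m k i x = lineAt m k j x → lineAt m k j x ≠ lineAt m k l x

variable {m k : ι → F} {i j t f : ι} {x y : F}

lemma crossing_comm (m k : ι → F) (i j : ι) : crossing m k i j = crossing m k j i := by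
  rw [crossing, crossing, ← neg_div_neg_eq, neg_sub, neg_sub]

lemma lineAt_sub_lineAt (h : m i ≠ m j) (x : F) :
    lineAt m k j x - lineAt m k i x = (m j - m i) * (x - crossing m k i j) := by
  have : m j - m i ≠ 0 := sub_ne_zero.mpr h.symm
  simp only [lineAt, crossing]
  field_simp
  ring

lemma lineAt_crossing (h : m i ≠ m j) :
    lineAt m k i (crossing m k i j) = lineAt m k j (crossing m k i j) := by
  have := lineAt_sub_lineAt (k := k) h (crossing m k i j)
  rwa [sub_self, mul_zero, sub_eq_zero, eq_comm] at this

variable [LinearOrder F]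

def region (m k : ι → F) (ε : ι → Bool) : Set (F × F) :=
  {p | ∀ i, (ε i = true → lineAt m k i p.1 < p.2) ∧ (ε i = false → p.2 < lineAt m k i p.1)}

def SeparatedAt (m k : ι → F) (ε : ι → Bool) (x : F) : Prop :=
  ∀ t f, ε t = true → ε f = false → lineAt m k t x < lineAt m k f x

lemma separatedAt_of_mem {ε : ι → Bool} {p : F × F} (hp : p ∈ region m k ε) :
    SeparatedAt m k ε p.1 :=
  fun t f ht hf => ((hp t).1 ht).trans ((hp f).2 hf)

section

variable [DecidableEq ι]

-- For `m i < m j`: the sign vector of the region just to the right of the crossing of lines `i`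
-- and `j`; it lies above `i`, below `j`, and on the same side of every other line as the vertex.
def vertexSign (m k : ι → F) (i j : ι) : ι → Bool :=
  fun l => decide (l = i ∨ lineAt m k l (crossing m k i j) < lineAt m k j (crossing m k i j))

lemma vertexSign_left : vertexSign m k i j i = true := by
  simp [vertexSign]

lemma vertexSign_right (h : m i < m j) : vertexSign m k i j j = false := by
  have hji : j ≠ i := fun hji => h.ne (congrArg m hji.symm)
  simp [vertexSign, hji]

lemma lineAt_le_lineAt_of_vertexSign (h : m i < m j) (ht : vertexSign m k i j t = true)
    (hf : vertexSign m k i j f = false) :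
    lineAt m k t (crossing m k i j) ≤ lineAt m k f (crossing m k i j) := by
  simp only [vertexSign, decide_eq_true_eq, decide_eq_false_iff_not, not_or, not_lt] at ht hf
  rcases ht with rfl | ht
  · exact (lineAt_crossing h.ne).trans_le hf.2
  · exact ht.le.trans hf.2

lemma eq_of_vertexSign_of_lineAt_eq (hc : NoThreeConcurrent m k) (h : m i < m j)
    (ht : vertexSign m k i j t = true) (hf : vertexSign m k i j f = false)
    (heq : lineAt m k t (crossing m k i j) = lineAt m k f (crossing m k i j)) :
    t = i ∧ f = j := by
  have hij : i ≠ j := fun hij => h.ne (congrArg m hij)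
  simp only [vertexSign, decide_eq_true_eq, decide_eq_false_iff_not, not_or, not_lt] at ht hf
  rcases ht with rfl | ht
  · refine ⟨rfl, by_contra fun hfj => hc t j f hij (Ne.symm hfj) (Ne.symm hf.1) _
      (lineAt_crossing h.ne) ?_⟩
    rw [← lineAt_crossing h.ne, heq]
  · exact absurd (heq ▸ ht) hf.2.not_gt

lemma not_separatedAt_crossing (h : m i < m j) :
    ¬ SeparatedAt m k (vertexSign m k i j) (crossing m k i j) :=
  fun hs => (hs i j vertexSign_left (vertexSign_right h)).ne (lineAt_crossing h.ne)

end

variable [IsStrictOrderedRing F]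

lemma lineAt_lt_lineAt_iff_crossing_lt (h : m i < m j) :
    lineAt m k i x < lineAt m k j x ↔ crossing m k i j < x := by
  rw [← sub_pos, lineAt_sub_lineAt h.ne, mul_pos_iff_of_pos_left (sub_pos.mpr h), sub_pos]

lemma lineAt_lt_lineAt_iff_lt_crossing (h : m j < m i) :
    lineAt m k i x < lineAt m k j x ↔ x < crossing m k i j := by
  rw [← sub_pos, lineAt_sub_lineAt h.ne', ← neg_mul_neg,
    mul_pos_iff_of_pos_left (neg_pos.mpr (sub_neg.mpr h)), neg_pos, sub_neg]

lemma slope_lt_of_lineAt (hxy : x < y) (hx : lineAt m k j x ≤ lineAt m k i x)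
    (hy : lineAt m k i y < lineAt m k j y) : m i < m j := by
  simp only [lineAt] at hx hy
  nlinarith

lemma crossing_mem_Ioc (hxy : x < y) (hx : lineAt m k i x < lineAt m k j x)
    (hy : lineAt m k j y ≤ lineAt m k i y) : crossing m k i j ∈ Set.Ioc x y := by
  have hji : m j < m i := by
    simp only [lineAt] at hx hy
    nlinarith
  exact ⟨(lineAt_lt_lineAt_iff_lt_crossing hji).mp hx,
    not_lt.mp fun h => hy.not_gt ((lineAt_lt_lineAt_iff_lt_crossing hji).mpr h)⟩

lemma SeparatedAt.of_le_of_le {ε : ι → Bool} {p q : F} (hp : SeparatedAt m k ε p)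
    (hq : SeparatedAt m k ε q) (hpx : p ≤ x) (hxq : x ≤ q) : SeparatedAt m k ε x := by
  intro t f ht hf
  have h₁ := hp t f ht hf
  have h₂ := hq t f ht hf
  simp only [lineAt] at h₁ h₂ ⊢
  rcases le_total (m t) (m f) with hle | hle <;> nlinarith

lemma exists_mem_region_of_separatedAt [Fintype ι] {ε : ι → Bool}
    (hs : SeparatedAt m k ε x) : ∃ y, (x, y) ∈ region m k ε := by
  obtain ⟨y, hlo, hhi⟩ := Order.exists_between_finsets
    (({l | ε l = true} : Finset ι).image (lineAt m k · x))
    (({l | ε l = false} : Finset ι).image (lineAt m k · x)) (by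
      simp only [mem_image, mem_filter, mem_univ, true_and]
      rintro _ ⟨t, ht, rfl⟩ _ ⟨f, hf, rfl⟩
      exact hs t f ht hf)
  exact ⟨y, fun l => ⟨fun hl => hlo _ (mem_image_of_mem _ (by simpa using hl)),
    fun hl => hhi _ (mem_image_of_mem _ (by simpa using hl))⟩⟩

lemma exists_crossing_notMem_Ioc [Fintype ι] (m k : ι → F) (x₀ : F) :
    ∃ x₁, x₀ < x₁ ∧ ∀ t f, crossing m k t f ∉ Set.Ioc x₀ x₁ := by
  obtain ⟨x₁, hlo, hhi⟩ := Order.exists_between_finsets ({x₀} : Finset F)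
    (((univ : Finset (ι × ι)).image fun p => crossing m k p.1 p.2).filter (x₀ < ·))
    (by simp +contextual)
  refine ⟨x₁, hlo x₀ (mem_singleton_self _), fun t f hmem => (hhi _ ?_).not_ge hmem.2⟩
  simp only [mem_filter, mem_image, mem_univ, true_and, Prod.exists]
  exact ⟨⟨t, f, rfl⟩, hmem.1⟩

section

variable [DecidableEq ι]

lemma separatedAt_vertexSign (hc : NoThreeConcurrent m k) (h : m i < m j)
    (hx : crossing m k i j < x)
    (hfree : ∀ t f, crossing m k t f ∉ Set.Ioc (crossing m k i j) x) :
    SeparatedAt m k (vertexSign m k i j) x := by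
  intro t f ht hf
  rcases (lineAt_le_lineAt_of_vertexSign h ht hf).lt_or_eq with hlt | heq
  · by_contra! hle
    exact hfree t f (crossing_mem_Ioc hx hlt hle)
  · obtain ⟨rfl, rfl⟩ := eq_of_vertexSign_of_lineAt_eq hc h ht hf heq
    exact (lineAt_lt_lineAt_iff_crossing_lt h).mpr hx

lemma exists_separatedAt_vertexSign [Fintype ι] (hc : NoThreeConcurrent m k) (h : m i < m j) :
    ∃ x₁, crossing m k i j < x₁ ∧
      ∀ x ∈ Set.Ioc (crossing m k i j) x₁, SeparatedAt m k (vertexSign m k i j) x := by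
  obtain ⟨x₁, hx₁, hfree⟩ := exists_crossing_notMem_Ioc m k (crossing m k i j)
  refine ⟨x₁, hx₁, fun x hx => separatedAt_vertexSign hc h hx.1 fun t f hmem => ?_⟩
  exact hfree t f ⟨hmem.1, hmem.2.trans hx.2⟩

lemma region_vertexSign_nonempty [Fintype ι] (hc : NoThreeConcurrent m k) (h : m i < m j) :
    (region m k (vertexSign m k i j)).Nonempty := by
  obtain ⟨x₁, hx₁, hsep⟩ := exists_separatedAt_vertexSign hc h
  obtain ⟨y, hy⟩ := exists_mem_region_of_separatedAt (hsep x₁ ⟨hx₁, le_rfl⟩)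
  exact ⟨_, hy⟩

lemma crossing_le_of_vertexSign_eq [Fintype ι] {i' j' : ι} (hc : NoThreeConcurrent m k)
    (h : m i < m j) (h' : m i' < m j') (he : vertexSign m k i j = vertexSign m k i' j') :
    crossing m k i j ≤ crossing m k i' j' := by
  by_contra! hlt
  obtain ⟨x₁, hx₁, hsep⟩ := exists_separatedAt_vertexSign hc h
  obtain ⟨x₁', hx₁', hsep'⟩ := exists_separatedAt_vertexSign hc h'
  rw [← he] at hsep'
  set p := min x₁' (crossing m k i j)
  exact not_separatedAt_crossing h <|
    (hsep' p ⟨lt_min hx₁' hlt, min_le_left _ _⟩).of_le_of_le (hsep x₁ ⟨hx₁, le_rfl⟩)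
      (min_le_right _ _) hx₁.le

lemma eq_of_vertexSign_eq [Fintype ι] {i' j' : ι} (hc : NoThreeConcurrent m k)
    (h : m i < m j) (h' : m i' < m j') (he : vertexSign m k i j = vertexSign m k i' j') :
    i = i' ∧ j = j' := by
  have hcross := (crossing_le_of_vertexSign_eq hc h h' he).antisymm
    (crossing_le_of_vertexSign_eq hc h' h he.symm)
  have ht : vertexSign m k i j i' = true := he ▸ vertexSign_left
  have hf : vertexSign m k i j j' = false := he ▸ vertexSign_right h'
  obtain ⟨rfl, rfl⟩ := eq_of_vertexSign_of_lineAt_eq hc h ht hf (hcross ▸ lineAt_crossing h'.ne)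
  exact ⟨rfl, rfl⟩

lemma vertexSign_eq_of_forall_crossing_le {ε : ι → Bool} (hc : NoThreeConcurrent m k)
    (hi : ε i = true) (hj : ε j = false) (hij : m i < m j)
    (hmax : ∀ t f, ε t = true → ε f = false → m t < m f → crossing m k t f ≤ crossing m k i j)
    (hs : SeparatedAt m k ε x) : vertexSign m k i j = ε := by
  set A := crossing m k i j
  have hA : A < x := (lineAt_lt_lineAt_iff_crossing_lt hij).mp (hs i j hi hj)
  have hvert : lineAt m k i A = lineAt m k j A := lineAt_crossing hij.ne
  -- A line on the wrong side of the vertex would have to cross a line of the other sign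
  -- between `A` and `x`, beyond the maximal crossing `A`.
  have hbelow : ∀ t f, ε t = true → ε f = false → lineAt m k f A < lineAt m k t A → False := by
    intro t f ht hf hlt
    have hx := hs t f ht hf
    have hcross := crossing_mem_Ioc hA hlt hx.le
    rw [crossing_comm] at hcross
    exact (hmax t f ht hf (slope_lt_of_lineAt hA hlt.le hx)).not_gt hcross.1
  funext l
  cases hl : ε l
  · simp only [vertexSign, decide_eq_false_iff_not, not_or, not_lt]
    exact ⟨fun hli => by simp [hli, hi] at hl,
      not_lt.mp fun hlt => hbelow i l hi hl (hvert ▸ hlt)⟩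
  · simp only [vertexSign, decide_eq_true_eq]
    by_cases hli : l = i
    · exact Or.inl hli
    have hjl : j ≠ l := fun hjl => by simp [← hjl, hj] at hl
    refine Or.inr (lt_of_le_of_ne (not_lt.mp fun hlt => hbelow l j hl hj hlt) fun heq => ?_)
    exact hc i j l (fun hij' => hij.ne (congrArg m hij')) hjl (Ne.symm hli) A hvert heq.symm

lemma exists_vertexSign_eq [Fintype ι] {ε : ι → Bool} (hc : NoThreeConcurrent m k)
    (hinc : ∃ t f, ε t = true ∧ ε f = false ∧ m t < m f) (hs : SeparatedAt m k ε x) :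
    ∃ i j, m i < m j ∧ vertexSign m k i j = ε := by
  obtain ⟨⟨i, j⟩, hmem, hmax⟩ := exists_max_image
    ({p | ε p.1 = true ∧ ε p.2 = false ∧ m p.1 < m p.2} : Finset (ι × ι))
    (fun p => crossing m k p.1 p.2) (by simpa [Finset.Nonempty] using hinc)
  simp only [mem_filter, mem_univ, true_and] at hmem
  refine ⟨i, j, hmem.2.2, vertexSign_eq_of_forall_crossing_le hc hmem.1 hmem.2.1 hmem.2.2
    (fun t f ht hf htf => hmax (t, f) (by simp [ht, hf, htf])) hs⟩

end

lemma region_neg (m k : ι → F) (ε : ι → Bool) :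
    region (-m) k ε =
      (LinearEquiv.neg F).prodCongr (LinearEquiv.refl F F) ⁻¹' region m k ε := by
  ext p
  simp [region, lineAt]

section

variable {ε : ι → Bool}

lemma exists_lt_of_not_sorted_neg (hm : Function.Injective m) (h : ¬ Sorted (-m) ε) :
    ∃ t f, ε t = true ∧ ε f = false ∧ m t < m f := by
  simpa using exists_lt_of_not_sorted (neg_injective.comp hm) h

lemma exists_forall_ge_mem_region_of_sorted [Fintype ι] (hs : Sorted m ε) :
    ∃ s X : F, ∀ x, X ≤ x → (x, s * x) ∈ region m k ε := by
  obtain ⟨s, hlo, hhi⟩ := Order.exists_between_finsets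
    (({l | ε l = true} : Finset ι).image m) (({l | ε l = false} : Finset ι).image m) (by
      simp only [mem_image, mem_filter, mem_univ, true_and]
      rintro _ ⟨t, ht, rfl⟩ _ ⟨f, hf, rfl⟩
      exact hs t f ht hf)
  have hev : ∀ᶠ x in atTop, (x, s * x) ∈ region m k ε := by
    simp only [region, Set.mem_ofPred_eq]
    refine eventually_all.mpr fun l => ?_
    cases hl : ε l
    · simpa [lineAt] using
        eventually_mul_add_lt_mul_add (hhi _ (mem_image_of_mem m (by simpa using hl))) 0 (k l)
    · simpa [lineAt] using
        eventually_mul_add_lt_mul_add (hlo _ (mem_image_of_mem m (by simpa using hl))) (k l) 0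
  exact ⟨s, eventually_atTop.mp hev⟩

lemma region_nonempty_of_sorted [Fintype ι] (hs : Sorted m ε) : (region m k ε).Nonempty := by
  obtain ⟨s, X, hX⟩ := exists_forall_ge_mem_region_of_sorted (k := k) hs
  exact ⟨_, hX X le_rfl⟩

lemma arrUnbounded_region_of_sorted [Fintype ι] (hs : Sorted m ε) :
    arrUnbounded (region m k ε) := by
  obtain ⟨s, X, hX⟩ := exists_forall_ge_mem_region_of_sorted (k := k) hs
  refine ⟨(X, s * X), (1, s), by simp, fun t ht => ?_⟩
  rw [show (X, s * X) + t • (1, s) = (X + t, s * (X + t)) from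
    Prod.ext (by simp) (by simp; ring)]
  exact hX _ (le_add_of_nonneg_right ht)

lemma arrUnbounded_region_of_sorted_neg [Fintype ι] (hs : Sorted (-m) ε) :
    arrUnbounded (region m k ε) := by
  have := arrUnbounded_region_of_sorted (k := k) hs
  rwa [region_neg, arrUnbounded_preimage] at this

lemma not_arrUnbounded_region_of_lt_of_lt (hi : ε i = true) (hj : ε j = false) (hij : m i < m j)
    (ht : ε t = true) (hf : ε f = false) (hft : m f < m t) : ¬ arrUnbounded (region m k ε) := by
  rintro ⟨v, w, hw, hray⟩
  have hray' : ∀ s : F, 0 ≤ s → (v.1 + s * w.1, v.2 + s * w.2) ∈ region m k ε :=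
    fun s hs => by convert hray s hs using 1; ext <;> simp
  by_cases hw₁ : w.1 = 0
  · refine hw (Prod.ext hw₁ (eq_zero_of_forall_nonneg_mem_Ioo (lo := lineAt m k i v.1)
      (hi := lineAt m k j v.1) (u := v.2) fun s hs => ?_))
    have hp := hray' s hs
    rw [hw₁, mul_zero, add_zero] at hp
    exact ⟨(hp i).1 hi, (hp j).2 hj⟩
  · refine hw₁ (eq_zero_of_forall_nonneg_mem_Ioo (lo := crossing m k i j)
      (hi := crossing m k t f) (u := v.1) fun s hs => ?_)
    have hsep := separatedAt_of_mem (hray' s hs)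
    exact ⟨(lineAt_lt_lineAt_iff_crossing_lt hij).mp (hsep i j hi hj),
      (lineAt_lt_lineAt_iff_lt_crossing hft).mp (hsep t f ht hf)⟩

lemma not_arrUnbounded_region_iff [Fintype ι] (hm : Function.Injective m) :
    ¬ arrUnbounded (region m k ε) ↔ ¬ Sorted m ε ∧ ¬ Sorted (-m) ε := by
  refine ⟨fun h => ⟨fun hs => h (arrUnbounded_region_of_sorted hs),
    fun hs => h (arrUnbounded_region_of_sorted_neg hs)⟩, fun ⟨hs, hs'⟩ => ?_⟩
  obtain ⟨t, f, ht, hf, hft⟩ := exists_lt_of_not_sorted hm hs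
  obtain ⟨i, j, hi, hj, hij⟩ := exists_lt_of_not_sorted_neg hm hs'
  exact not_arrUnbounded_region_of_lt_of_lt hi hj hij ht hf hft

lemma not_sorted_neg_iff (hs : Sorted m ε) :
    ¬ Sorted (-m) ε ↔ (∃ t, ε t = true) ∧ ∃ f, ε f = false := by
  refine ⟨fun h => ?_, fun ⟨⟨t, ht⟩, ⟨f, hf⟩⟩ =>
    not_sorted_of_le ht hf (neg_le_neg (hs t f ht hf).le)⟩
  simp only [Sorted, not_forall] at h
  obtain ⟨t, f, ht, hf, -⟩ := h
  exact ⟨⟨t, ht⟩, ⟨f, hf⟩⟩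

lemma card_sorted_and_not_sorted_neg [Fintype ι] [DecidableEq ι] (hm : Function.Injective m) :
    Nat.card {ε : ι → Bool // Sorted m ε ∧ ¬ Sorted (-m) ε} = Fintype.card ι - 1 := by
  classical
  rw [Nat.card_eq_fintype_card, Fintype.card_subtype, ← Nat.card_Ico 1 (Fintype.card ι)]
  have hbounds : ∀ ε : ι → Bool, Sorted m ε →
      (¬ Sorted (-m) ε ↔ #{l | ε l = true} ∈ Ico 1 (Fintype.card ι)) := by
    intro ε hs
    rw [not_sorted_neg_iff hs, mem_Ico, Nat.one_le_iff_ne_zero, Ne, card_eq_zero,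
      ← not_nonempty_iff_eq_empty, not_not, filter_nonempty_iff, card_lt_iff_ne_univ, Ne,
      eq_univ_iff_forall]
    simp
  refine card_bij (fun ε _ => #{l | ε l = true}) (fun ε hε => ?_) (fun ε hε ε' hε' h => ?_)
    (fun r hr => ?_)
  · simp only [mem_filter, mem_univ, true_and] at hε
    exact (hbounds ε hε.1).mp hε.2
  · simp only [mem_filter, mem_univ, true_and] at hε hε'
    exact hε.1.eq_of_card_eq hε'.1 h
  · obtain ⟨ε, hs, hcard⟩ := exists_sorted_card_eq hm (mem_Ico.mp hr).2.le
    exact ⟨ε, by simpa [hs, hbounds ε hs, hcard] using hr, hcard⟩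

lemma card_region_nonempty_and_not_sorted_neg [Fintype ι] [DecidableEq ι]
    (hm : Function.Injective m) (hc : NoThreeConcurrent m k) :
    Nat.card {ε : ι → Bool // (region m k ε).Nonempty ∧ ¬ Sorted (-m) ε} =
      (Fintype.card ι).choose 2 := by
  rw [← hm.card_subtype_lt_eq_choose_two]
  refine (Nat.card_eq_of_bijective (fun p => ⟨vertexSign m k p.1.1 p.1.2,
    region_vertexSign_nonempty hc p.2, not_sorted_of_le vertexSign_left (vertexSign_right p.2)
      (neg_le_neg p.2.le)⟩) ⟨fun p q hpq => ?_, fun ε => ?_⟩).symm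
  · obtain ⟨h₁, h₂⟩ := eq_of_vertexSign_eq hc p.2 q.2 (congrArg Subtype.val hpq)
    exact Subtype.ext (Prod.ext h₁ h₂)
  · obtain ⟨ε, ⟨p, hp⟩, hns⟩ := ε
    obtain ⟨i, j, hij, he⟩ :=
      exists_vertexSign_eq hc (exists_lt_of_not_sorted_neg hm hns) (separatedAt_of_mem hp)
    exact ⟨⟨(i, j), hij⟩, Subtype.ext he⟩

theorem card_bounded_region [Fintype ι] [DecidableEq ι] (hm : Function.Injective m)
    (hc : NoThreeConcurrent m k) :
    Nat.card {ε : ι → Bool // (region m k ε).Nonempty ∧ ¬ arrUnbounded (region m k ε)} =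
      (Fintype.card ι - 1).choose 2 := by
  have hsplit := Nat.card_subtype_and_not_add
    (fun ε => (region m k ε).Nonempty ∧ ¬ Sorted (-m) ε) (Sorted m)
  have hcuts : Nat.card {ε // ((region m k ε).Nonempty ∧ ¬ Sorted (-m) ε) ∧ Sorted m ε} =
      Fintype.card ι - 1 := by
    rw [← card_sorted_and_not_sorted_neg hm]
    exact Nat.card_congr (Equiv.subtypeEquivRight fun ε =>
      ⟨fun h => ⟨h.2, h.1.2⟩, fun h => ⟨⟨region_nonempty_of_sorted h.1, h.2⟩, h.1⟩⟩)
  have hbounded : Nat.card {ε // (region m k ε).Nonempty ∧ ¬ arrUnbounded (region m k ε)} =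
      Nat.card {ε // ((region m k ε).Nonempty ∧ ¬ Sorted (-m) ε) ∧ ¬ Sorted m ε} :=
    Nat.card_congr (Equiv.subtypeEquivRight fun ε => by
      rw [not_arrUnbounded_region_iff hm]
      tauto)
  rw [card_region_nonempty_and_not_sorted_neg hm hc, hcuts,
    Nat.choose_two_eq_choose_two_sub_one_add] at hsplit
  rw [hbounded]
  omega

end

end SlopeArrangement

section Shear

variable {R : Type*} [CommRing R]

def shear (lam : R) : (R × R) ≃ₗ[R] R × R where
  toFun p := (p.1 + lam * p.2, p.2)
  invFun p := (p.1 - lam * p.2, p.2)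
  map_add' p q := Prod.ext (by simp only [Prod.fst_add, Prod.snd_add]; ring) rfl
  map_smul' r p :=
    Prod.ext (by simp only [Prod.smul_fst, Prod.smul_snd, smul_eq_mul, RingHom.id_apply]; ring) rfl
  left_inv p := by simp
  right_inv p := by simp

end Shear

lemma exists_mul_add_ne_zero {K ι : Type*} [Field K] [Infinite K] [Fintype ι] (a b : ι → K)
    (h : ∀ i, (a i, b i) ≠ (0, 0)) : ∃ lam, ∀ i, a i * lam + b i ≠ 0 := by
  classical
  obtain ⟨lam, hlam⟩ := Infinite.exists_notMem_finset (univ.image fun i => -b i / a i)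
  refine ⟨lam, fun i hi => ?_⟩
  by_cases ha : a i = 0
  · rw [ha, zero_mul, zero_add] at hi
    exact h i (by rw [ha, hi])
  · refine hlam (mem_image.mpr ⟨i, mem_univ i, ?_⟩)
    rw [div_eq_iff ha]
    linear_combination -hi

section ShearedLines

variable {F : Type*} [Field F] {ι : Type*} (a b c : ι → F) (lam : F)

def shearedSlope : ι → F := fun i => -a i / (a i * lam + b i)

def shearedIntercept : ι → F := fun i => c i / (a i * lam + b i)

def orientSigns [LinearOrder F] (ε : ι → Bool) : ι → Bool :=
  fun i => if 0 < a i * lam + b i then ε i else !ε i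

variable {a b c lam}

lemma orientSigns_involutive [LinearOrder F] : Function.Involutive (orientSigns a b lam) :=
  fun ε => funext fun i => by by_cases h : 0 < a i * lam + b i <;> simp [orientSigns, h]

lemma shearedSlope_injective (hpar : ∀ i j, i ≠ j → a i * b j ≠ a j * b i)
    (hlam : ∀ i, a i * lam + b i ≠ 0) : Function.Injective (shearedSlope a b lam) := by
  intro i j hij
  by_contra hne
  apply hpar i j hne
  simp only [shearedSlope, neg_div, neg_inj] at hij
  rw [div_eq_div_iff (hlam i) (hlam j)] at hij
  linear_combination hij

end ShearedLines

section ShearedArrangement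

open SlopeArrangement

variable {F : Type*} [Field F] [LinearOrder F] [IsStrictOrderedRing F] {lam : F} {n : ℕ}
  {a b c : Fin n → F}

lemma arrLine_shear {i : Fin n} (hi : a i * lam + b i ≠ 0) (p : F × F) :
    arrLine a b c i (shear lam p) = (a i * lam + b i) *
      (p.2 - lineAt (shearedSlope a b lam) (shearedIntercept a b c lam) i p.1) := by
  simp only [arrLine, shear, lineAt, shearedSlope, shearedIntercept, LinearEquiv.coe_mk,
    LinearMap.coe_mk, AddHom.coe_mk]
  field_simp
  ring

lemma noThreeConcurrent_sheared (hlam : ∀ i, a i * lam + b i ≠ 0)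
    (hconc : ∀ i j k : Fin n, i ≠ j → j ≠ k → i ≠ k →
      ¬ ∃ p : F × F, arrLine a b c i p = 0 ∧ arrLine a b c j p = 0 ∧ arrLine a b c k p = 0) :
    NoThreeConcurrent (shearedSlope a b lam) (shearedIntercept a b c lam) := by
  intro i j l hij hjl hil x h₁ h₂
  set y := lineAt (shearedSlope a b lam) (shearedIntercept a b c lam) i x
  have hzero : ∀ l, lineAt (shearedSlope a b lam) (shearedIntercept a b c lam) l x = y →
      arrLine a b c l (shear lam (x, y)) = 0 := fun l hl => by
    rw [arrLine_shear (hlam l), hl, sub_self, mul_zero]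
  exact hconc i j l hij hjl hil ⟨_, hzero i rfl, hzero j h₁.symm, hzero l (h₁.trans h₂).symm⟩

lemma shear_preimage_arrRegion (hlam : ∀ i, a i * lam + b i ≠ 0) (ε : Fin n → Bool) :
    shear lam ⁻¹' arrRegion a b c ε = region (shearedSlope a b lam)
      (shearedIntercept a b c lam) (orientSigns a b lam ε) := by
  ext p
  simp only [Set.mem_preimage, arrRegion, region, Set.mem_ofPred_eq, arrLine_shear (hlam _)]
  refine forall_congr' fun i => ?_
  rcases (hlam i).lt_or_gt with hneg | hpos
  · cases hε : ε i <;> simp [orientSigns, hε, hneg, hneg.not_gt, mul_pos_iff, mul_neg_iff]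
  · cases hε : ε i <;> simp [orientSigns, hε, hpos, hpos.not_gt, mul_neg_iff]

lemma card_bounded_arrRegion_eq (hlam : ∀ i, a i * lam + b i ≠ 0) :
    Nat.card {ε : Fin n → Bool // (arrRegion a b c ε).Nonempty ∧
        ¬ arrUnbounded (arrRegion a b c ε)} =
      Nat.card {ε : Fin n → Bool // (region (shearedSlope a b lam) (shearedIntercept a b c lam)
        ε).Nonempty ∧ ¬ arrUnbounded (region (shearedSlope a b lam)
          (shearedIntercept a b c lam) ε)} :=
  Nat.card_congr <| Equiv.subtypeEquiv orientSigns_involutive.toPerm fun ε => by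
    rw [Function.Involutive.coe_toPerm, ← shear_preimage_arrRegion hlam,
      arrUnbounded_preimage, (shear lam).surjective.nonempty_preimage]

end ShearedArrangement

theorem count_bounded_regions_of_line_arrangement_general
    {F : Type*} [Field F] [LinearOrder F] [IsStrictOrderedRing F] (n : ℕ)
    (a b c : Fin n → F)
    (hnd : ∀ i : Fin n, (a i, b i) ≠ (0, 0))
    (hpar : ∀ i j : Fin n, i ≠ j → a i * b j ≠ a j * b i)
    (hconc : ∀ i j k : Fin n, i ≠ j → j ≠ k → i ≠ k →
      ¬ ∃ p : F × F, arrLine a b c i p = 0 ∧ arrLine a b c j p = 0 ∧ arrLine a b c k p = 0) :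
    Nat.card {ε : Fin n → Bool // (arrRegion a b c ε).Nonempty ∧
      ¬ arrUnbounded (arrRegion a b c ε)} = (n - 1) * (n - 2) / 2 := by
  obtain ⟨lam, hlam⟩ := exists_mul_add_ne_zero a b hnd
  rw [card_bounded_arrRegion_eq hlam, SlopeArrangement.card_bounded_region
    (shearedSlope_injective hpar hlam) (noThreeConcurrent_sheared hlam hconc), Fintype.card_fin,
    Nat.choose_two_right, Nat.sub_sub]

/-- A line arrangement of `n ≥ 1` lines in the plane over a linearly ordered field
(no two parallel, no three concurrent) has exactly `(n-1)(n-2)/2 = C(n-1, 2)` bounded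
regions. -/
theorem count_bounded_regions_of_line_arrangement
    {F : Type*} [Field F] [LinearOrder F] [IsStrictOrderedRing F] (n : ℕ) (hn : 1 ≤ n)
    (a b c : Fin n → F)
    (hnd : ∀ i : Fin n, (a i, b i) ≠ (0, 0))
    (hpar : ∀ i j : Fin n, i ≠ j → a i * b j ≠ a j * b i)
    (hconc : ∀ i j k : Fin n, i ≠ j → j ≠ k → i ≠ k →
      ¬ ∃ p : F × F, arrLine a b c i p = 0 ∧ arrLine a b c j p = 0 ∧ arrLine a b c k p = 0) :
    Nat.card {ε : Fin n → Bool // (arrRegion a b c ε).Nonempty ∧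
      ¬ arrUnbounded (arrRegion a b c ε)} = (n - 1) * (n - 2) / 2 :=
  count_bounded_regions_of_line_arrangement_general n a b c hnd hpar hconc
end

section
/- Let F be a linearly ordered field and let L_1, …, L_n be a line arrangement in F² given by affine functions f_i. Let ε, ε' ∈ {−1,+1}ⁿ be sign vectors whose regions R_ε and R_{ε'} are nonempty, and let v ∈ R_ε and w ∈ R_{ε'}. Then the number of indices i such that the segment {(1−t)·v + t·w : t ∈ F, 0 ≤ t ≤ 1} meets the line L_i equals #{i : ε_i ≠ ε'_i}. In particular this crossing number between the two regions does not depend on the choice of the points v and w. (The crossing number between two regions is well defined.) -/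
/-! An affine function vanishes somewhere on a segment whose endpoints it does not vanish at
exactly when it changes sign between them; for a point of `R_ε` the sign of `f_i` is `ε_i`,
so the lines crossed by a segment from `R_ε` to `R_ε'` are those with `ε_i ≠ ε'_i`,
whatever the endpoints. -/

section

variable {F : Type*} [Field F] [LinearOrder F] [IsStrictOrderedRing F]

theorem exists_convexCombination_eq_zero_iff_mul_neg {x y : F} (hx : x ≠ 0) (hy : y ≠ 0) :
    (∃ t : F, 0 ≤ t ∧ t ≤ 1 ∧ (1 - t) * x + t * y = 0) ↔ x * y < 0 := by
  constructor
  · rintro ⟨t, ht0, ht1, hzero⟩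
    by_contra! hxy
    have hxy : 0 < x * y := lt_of_le_of_ne hxy (mul_ne_zero hx hy).symm
    rcases ht1.lt_or_eq with ht1 | rfl
    · have key : (1 - t) * (x * x) + t * (x * y) = 0 := by
        linear_combination x * hzero
      nlinarith [mul_pos (sub_pos.2 ht1) (mul_self_pos.2 hx), mul_nonneg ht0 hxy.le]
    · exact hy (by simpa using hzero)
  · intro hxy
    have hxy' : x - y ≠ 0 := fun h => by
      rw [sub_eq_zero] at h; subst h; exact (mul_self_nonneg x).not_gt hxy
    refine ⟨x / (x - y), ?_, ?_, by field_simp; ring⟩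
    · rcases hx.lt_or_gt with hx | hx
      · exact div_nonneg_of_nonpos hx.le (by nlinarith)
      · exact div_nonneg hx.le (by nlinarith)
    · rcases hx.lt_or_gt with hx | hx
      · rw [div_le_one_of_neg (by nlinarith)]; nlinarith
      · rw [div_le_one (by nlinarith)]; nlinarith

variable {n : ℕ} {a b c : Fin n → F}

theorem arrLine_convexCombination (i : Fin n) (v w : F × F) (t : F) :
    arrLine a b c i ((1 - t) • v + t • w) = (1 - t) * arrLine a b c i v + t * arrLine a b c i w := by
  simp only [arrLine, Prod.fst_add, Prod.snd_add, Prod.smul_fst, Prod.smul_snd, smul_eq_mul]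
  ring

theorem arrLine_ne_zero_of_mem_arrRegion {ε : Fin n → Bool} {p : F × F}
    (hp : p ∈ arrRegion a b c ε) (i : Fin n) : arrLine a b c i p ≠ 0 :=
  right_ne_zero_of_mul (hp i).ne'

theorem arrLine_mul_arrLine_neg_iff {ε ε' : Fin n → Bool} {v w : F × F}
    (hv : v ∈ arrRegion a b c ε) (hw : w ∈ arrRegion a b c ε') (i : Fin n) :
    arrLine a b c i v * arrLine a b c i w < 0 ↔ ε i ≠ ε' i := by
  have hvi := hv i
  have hwi := hw i
  cases hεi : ε i <;> cases hεi' : ε' i <;> simp only [hεi, hεi'] at hvi hwi <;> simp at hvi hwi ⊢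
  · exact (mul_pos_of_neg_of_neg hvi hwi).le
  · exact mul_neg_of_neg_of_pos hvi hwi
  · exact mul_neg_of_pos_of_neg hvi hwi
  · exact (mul_pos hvi hwi).le

theorem exists_arrLine_segment_eq_zero_iff {ε ε' : Fin n → Bool} {v w : F × F}
    (hv : v ∈ arrRegion a b c ε) (hw : w ∈ arrRegion a b c ε') (i : Fin n) :
    (∃ t : F, 0 ≤ t ∧ t ≤ 1 ∧ arrLine a b c i ((1 - t) • v + t • w) = 0) ↔ ε i ≠ ε' i := by
  simp only [arrLine_convexCombination]
  rw [exists_convexCombination_eq_zero_iff_mul_neg (arrLine_ne_zero_of_mem_arrRegion hv i)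
    (arrLine_ne_zero_of_mem_arrRegion hw i)]
  exact arrLine_mul_arrLine_neg_iff hv hw i

end

theorem crossing_number_well_defined_general
    {F : Type*} [Field F] [LinearOrder F] [IsStrictOrderedRing F] (n : ℕ)
    (a b c : Fin n → F)
    (ε ε' : Fin n → Bool) (v w : F × F)
    (hv : v ∈ arrRegion a b c ε) (hw : w ∈ arrRegion a b c ε') :
    Nat.card {i : Fin n // ∃ t : F, 0 ≤ t ∧ t ≤ 1 ∧
        arrLine a b c i ((1 - t) • v + t • w) = 0}
      = Nat.card {i : Fin n // ε i ≠ ε' i} :=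
  Nat.card_congr (Equiv.subtypeEquivRight (exists_arrLine_segment_eq_zero_iff hv hw))

/-- The crossing number between two regions is well defined: for interior points
`v ∈ R_ε` and `w ∈ R_ε'`, the number of lines of the arrangement met by the segment
from `v` to `w` equals `#{i : ε i ≠ ε' i}`; in particular it does not depend on the
choice of `v` and `w`. -/
theorem crossing_number_well_defined
    {F : Type*} [Field F] [LinearOrder F] [IsStrictOrderedRing F] (n : ℕ)
    (a b c : Fin n → F)
    (hnd : ∀ i : Fin n, (a i, b i) ≠ (0, 0))
    (hpar : ∀ i j : Fin n, i ≠ j → a i * b j ≠ a j * b i)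
    (hconc : ∀ i j k : Fin n, i ≠ j → j ≠ k → i ≠ k →
      ¬ ∃ p : F × F, arrLine a b c i p = 0 ∧ arrLine a b c j p = 0 ∧ arrLine a b c k p = 0)
    (ε ε' : Fin n → Bool) (v w : F × F)
    (hv : v ∈ arrRegion a b c ε) (hw : w ∈ arrRegion a b c ε') :
    Nat.card {i : Fin n // ∃ t : F, 0 ≤ t ∧ t ≤ 1 ∧
        arrLine a b c i ((1 - t) • v + t • w) = 0}
      = Nat.card {i : Fin n // ε i ≠ ε' i} :=
  crossing_number_well_defined_general n a b c ε ε' v w hv hw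
end
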